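/- Let M be a smooth manifold without boundary of dimension n, let X ⊆ M be the image of a smooth embedding of the closed unit ball B̄ⁿ into M, and let U ⊆ X be a nonempty subset that is open in M. Then there exists a diffeomorphism ψ : M → M with compact support such that ψ(X) ⊆ U. -/

import Mathlib

/-!
Write `X = g(B̄)` and pick `q ∈ B̄` and `ε > 0` with `g(B(q, ε)) ⊆ U`. It suffices to find a
diffeomorphism `h` of `ℝⁿ` that is the identity outside a ball `B(0, R)`, `1 < R`, with
`h(B̄) ⊆ B(q, ε)`: then `g ∘ h ∘ g⁻¹` on `g(B(0, ρ))`, `R < ρ`, extended by the identity, is the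
required `ψ`. It is smooth because `g` has smooth local inverses (inverse function theorem) and
`h` is the identity near the sphere of radius `ρ`. For `h` take an iterate of
`x ↦ x + a χ(x) (q - x)`, where `χ` is a bump function equal to `1` on `B̄` and supported in
`B(0, R)`: for small `a > 0` it is a Lipschitz-small perturbation of the identity, hence a
diffeomorphism, and on the convex set `B̄` it is the homothety of ratio `1 - a` centred at `q`.
-/

open Function Set
open scoped Manifold

noncomputable section

/-- `X` is the image of a smooth embedding of the closed unit ball `B̄ⁿ` into the manifold
`M`: there is a smooth map `g` defined on an open neighborhood of `B̄ⁿ ⊆ ℝⁿ`, injective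
there, with everywhere injective differential, such that `X = g(B̄ⁿ)`. -/
def IsBallImageIn (n : ℕ) {M : Type*} [TopologicalSpace M]
    [ChartedSpace (EuclideanSpace ℝ (Fin n)) M] [IsManifold (𝓡 n) ((⊤ : ℕ∞) : WithTop ℕ∞) M]
    (X : Set M) : Prop :=
  ∃ (U : Set (EuclideanSpace ℝ (Fin n))) (g : EuclideanSpace ℝ (Fin n) → M),
    IsOpen U ∧ Metric.closedBall 0 1 ⊆ U ∧
    ContMDiffOn (𝓡 n) (𝓡 n) (⊤ : ℕ∞) g U ∧ Set.InjOn g U ∧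
    (∀ x ∈ U, Function.Injective (mfderiv (𝓡 n) (𝓡 n) g x)) ∧
    X = g '' Metric.closedBall 0 1

/-- `ψ` is a diffeomorphism of the manifold `M` with compact support: it is smooth, has a
smooth two-sided inverse, and the closure of `{x : ψ x ≠ x}` is compact. -/
def IsCSDiffeoM (n : ℕ) {M : Type*} [TopologicalSpace M]
    [ChartedSpace (EuclideanSpace ℝ (Fin n)) M] [IsManifold (𝓡 n) ((⊤ : ℕ∞) : WithTop ℕ∞) M]
    (ψ : M → M) : Prop :=
  ContMDiff (𝓡 n) (𝓡 n) (⊤ : ℕ∞) ψ ∧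
  (∃ ψinv : M → M, ContMDiff (𝓡 n) (𝓡 n) (⊤ : ℕ∞) ψinv ∧
    Function.LeftInverse ψinv ψ ∧ Function.RightInverse ψinv ψ) ∧
  IsCompact (closure {x : M | ψ x ≠ x})

open Metric
open scoped ContDiff NNReal Topology

section PerturbationOfIdentity

variable {𝕜 E : Type*} [NontriviallyNormedField 𝕜] [NormedAddCommGroup E] [NormedSpace 𝕜 E]
  {n : WithTop ℕ∞} {u : E → E} {C : ℝ≥0}

theorem approximatesLinearOn_id_add (hu : LipschitzWith C u) :
    ApproximatesLinearOn (fun x => x + u x)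
      (ContinuousLinearEquiv.refl 𝕜 E : E →L[𝕜] E) univ C := by
  rw [ApproximatesLinearOn.approximatesLinearOn_iff_lipschitzOnWith]
  convert hu.lipschitzOnWith (s := univ) using 1
  ext x
  simp

theorem subsingleton_or_lt_nnnorm_refl_symm_inv (hC : C < 1) :
    Subsingleton E ∨ C < ‖((ContinuousLinearEquiv.refl 𝕜 E).symm : E →L[𝕜] E)‖₊⁻¹ := by
  rcases subsingleton_or_nontrivial E with hE | hE
  · exact .inl hE
  · right
    simpa using hC

variable [CompleteSpace E]

theorem ContinuousLinearMap.exists_equiv_eq_id_add {T : E →L[𝕜] E} (hT : ‖T‖ < 1) :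
    ∃ e : E ≃L[𝕜] E, (e : E →L[𝕜] E) = ContinuousLinearMap.id 𝕜 E + T := by
  have hT' : ‖-T‖ < 1 := by rwa [norm_neg]
  refine ⟨.ofUnit (Units.oneSub (-T) hT'), ?_⟩
  change ((Units.oneSub (-T) hT' : (E →L[𝕜] E)ˣ) : E →L[𝕜] E) = _
  rw [Units.val_oneSub, sub_neg_eq_add, ContinuousLinearMap.one_def]

theorem exists_equiv_hasFDerivAt_id_add (hu : ContDiff 𝕜 n u) (hn : n ≠ 0)
    (hlip : LipschitzWith C u) (hC : C < 1) :
    ∃ e : E → E ≃L[𝕜] E, ∀ x, HasFDerivAt (fun x => x + u x) (e x : E →L[𝕜] E) x := by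
  have hnorm (x : E) : ‖fderiv 𝕜 u x‖ < 1 :=
    (norm_fderiv_le_of_lipschitz 𝕜 hlip).trans_lt (by exact_mod_cast hC)
  choose e he using fun x => ContinuousLinearMap.exists_equiv_eq_id_add (hnorm x)
  refine ⟨e, fun x => ?_⟩
  rw [he]
  exact (hasFDerivAt_id x).add ((hu.differentiable hn) x).hasFDerivAt

def Diffeomorph.idAddOfLipschitz (hu : ContDiff 𝕜 n u) (hn : n ≠ 0) (hlip : LipschitzWith C u)
    (hC : C < 1) : E ≃ₘ^n⟮𝓘(𝕜, E), 𝓘(𝕜, E)⟯ E :=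
  let f := (approximatesLinearOn_id_add (𝕜 := 𝕜) hlip).toHomeomorph _
    (subsingleton_or_lt_nnnorm_refl_symm_inv hC)
  { toEquiv := f.toEquiv
    contMDiff_toFun := contMDiff_iff_contDiff.2 (contDiff_id.add hu)
    contMDiff_invFun := contMDiff_iff_contDiff.2 <|
      f.contDiff_symm (exists_equiv_hasFDerivAt_id_add hu hn hlip hC).choose_spec
        (contDiff_id.add hu) }

@[simp]
theorem Diffeomorph.coe_idAddOfLipschitz (hu : ContDiff 𝕜 n u) (hn : n ≠ 0)
    (hlip : LipschitzWith C u) (hC : C < 1) :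
    ⇑(Diffeomorph.idAddOfLipschitz hu hn hlip hC) = fun x => x + u x :=
  rfl

end PerturbationOfIdentity

section Iterate

variable {𝕜 E H M : Type*} [NontriviallyNormedField 𝕜] [NormedAddCommGroup E] [NormedSpace 𝕜 E]
  [TopologicalSpace H] {I : ModelWithCorners 𝕜 E H} [TopologicalSpace M] [ChartedSpace H M]
  {n : WithTop ℕ∞}

def Diffeomorph.iterate (h : M ≃ₘ^n⟮I, I⟯ M) : ℕ → M ≃ₘ^n⟮I, I⟯ M
  | 0 => Diffeomorph.refl I M n
  | m + 1 => (h.iterate m).trans h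

@[simp]
theorem Diffeomorph.coe_iterate (h : M ≃ₘ^n⟮I, I⟯ M) (m : ℕ) : ⇑(h.iterate m) = (⇑h)^[m] := by
  induction m with
  | zero => rfl
  | succ m ih => rw [iterate, coe_trans, ih, Function.iterate_succ']

end Iterate

section Shrinking

open AffineMap

variable {E : Type*} [NormedAddCommGroup E] [NormedSpace ℝ E]

theorem Set.EqOn.iterate_homothety {s : Set E} (hs : Convex ℝ s) {q : E} (hq : q ∈ s)
    {t : ℝ} (ht : t ∈ Icc 0 1) {f : E → E} (hf : EqOn f (homothety q t) s) (m : ℕ) :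
    EqOn f^[m] (homothety q (t ^ m)) s := by
  induction m with
  | zero => intro x _; simp
  | succ m ih =>
    intro x hx
    have hmem : homothety q (t ^ m) x ∈ s := by
      rw [homothety_eq_lineMap]
      exact hs.lineMap_mem hq hx ⟨pow_nonneg ht.1 m, pow_le_one₀ ht.1 ht.2⟩
    rw [iterate_succ_apply', ih hx, hf hmem, pow_succ', homothety_mul_apply]

variable [FiniteDimensional ℝ E] [HasContDiffBump E]

theorem exists_diffeomorph_eqOn_homothety (c q : E) {r R : ℝ} (hr : 0 < r) (hrR : r < R) :
    ∃ t ∈ Ico (0 : ℝ) 1, ∃ h : E ≃ₘ^∞⟮𝓘(ℝ, E), 𝓘(ℝ, E)⟯ E,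
      (∀ x ∉ ball c R, h x = x) ∧ EqOn h (homothety q t) (closedBall c r) := by
  let χ : ContDiffBump c := ⟨r, R, hr, hrR⟩
  set v : E → E := fun x => χ x • (q - x)
  have hv : ContDiff ℝ ∞ v := χ.contDiff.smul (contDiff_const.sub contDiff_id)
  obtain ⟨L, hL⟩ := hv.lipschitzWith_of_hasCompactSupport
    (χ.hasCompactSupport.smul_right (f' := fun x => q - x)) (by simp)
  set a : ℝ := ((L : ℝ) + 1)⁻¹
  have ha : 0 < a := by positivity
  have ha1 : a ≤ 1 := inv_le_one_of_one_le₀ (by simp)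
  have haL : ‖a‖₊ * L < 1 := by
    rw [← NNReal.coe_lt_coe]
    push_cast
    rw [Real.norm_eq_abs, abs_of_pos ha, inv_mul_lt_one₀ (by positivity)]
    linarith
  have hu : ContDiff ℝ ∞ (fun x => a • v x) := contDiff_const.smul hv
  refine ⟨1 - a, ⟨by linarith, by linarith⟩,
    Diffeomorph.idAddOfLipschitz hu (by simp) ((lipschitzWith_smul a).comp hL) haL, ?_, ?_⟩
  · intro x hx
    have : χ x = 0 := by rwa [← notMem_support, χ.support_eq]
    simp [v, this]
  · intro x hx
    simp only [Diffeomorph.coe_idAddOfLipschitz, v, χ.one_of_mem_closedBall hx, one_smul,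
      homothety_apply, vsub_eq_sub, vadd_eq_add]
    module

theorem exists_diffeomorph_mapsTo_ball {c q : E} {r R ε : ℝ} (hr : 0 < r) (hrR : r < R)
    (hq : q ∈ closedBall c r) (hε : 0 < ε) :
    ∃ h : E ≃ₘ^∞⟮𝓘(ℝ, E), 𝓘(ℝ, E)⟯ E,
      (∀ x ∉ ball c R, h x = x) ∧ MapsTo h (closedBall c r) (ball q ε) := by
  obtain ⟨t, ht, h, hfix, hhom⟩ := exists_diffeomorph_eqOn_homothety c q hr hrR
  obtain ⟨m, hm⟩ : ∃ m : ℕ, t ^ m < ε / (2 * r) := exists_pow_lt_of_lt_one (by positivity) ht.2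
  refine ⟨h.iterate m, fun x hx => ?_, fun x hx => ?_⟩
  · rw [Diffeomorph.coe_iterate]
    exact iterate_fixed (hfix x hx) m
  · have hdist : dist q x ≤ 2 * r := by
      linarith [dist_triangle_right q x c, mem_closedBall.1 hq, mem_closedBall.1 hx]
    rw [Diffeomorph.coe_iterate, mem_ball,
      hhom.iterate_homothety (convex_closedBall c r) hq (Ico_subset_Icc_self ht) m hx,
      dist_homothety_center, Real.norm_of_nonneg (pow_nonneg ht.1 m)]
    calc t ^ m * dist q x ≤ t ^ m * (2 * r) := by gcongr; exact pow_nonneg ht.1 m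
      _ < ε := (lt_div_iff₀ (by positivity)).1 hm

end Shrinking

section LocalInverse

variable {E M : Type*} [NormedAddCommGroup E] [NormedSpace ℝ E] [FiniteDimensional ℝ E]
  [TopologicalSpace M] [ChartedSpace E M] [IsManifold 𝓘(ℝ, E) ∞ M]

theorem exists_openPartialHomeomorph_of_injective_mfderiv {g : E → M} {x : E}
    (hg : ContMDiffAt 𝓘(ℝ, E) 𝓘(ℝ, E) ∞ g x)
    (hinj : Injective (mfderiv 𝓘(ℝ, E) 𝓘(ℝ, E) g x)) :
    ∃ Φ : OpenPartialHomeomorph E M, x ∈ Φ.source ∧ EqOn g Φ Φ.source ∧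
      ContMDiffAt 𝓘(ℝ, E) 𝓘(ℝ, E) ∞ Φ.symm (g x) := by
  have hinf : (∞ : WithTop ℕ∞) ≠ 0 := by simp
  set c := chartAt E (g x)
  have hgc : g x ∈ c.source := mem_chart_source E (g x)
  have hc : ContMDiffAt 𝓘(ℝ, E) 𝓘(ℝ, E) ∞ c (g x) :=
    contMDiffOn_chart.contMDiffAt (c.open_source.mem_nhds hgc)
  have hG : ContDiffAt ℝ ∞ (c ∘ g) x := (hc.comp x hg).contDiffAt
  have hG'inj : Injective (fderiv ℝ (c ∘ g) x) := by
    rw [← mfderiv_eq_fderiv,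
      mfderiv_comp x (hc.mdifferentiableAt hinf) (hg.mdifferentiableAt hinf)]
    exact ((mdifferentiable_chart (g x)).mfderiv_injective hgc).comp hinj
  set e : E ≃L[ℝ] E := (LinearMap.linearEquivOfInjective
    (fderiv ℝ (c ∘ g) x : E →ₗ[ℝ] E) hG'inj rfl).toContinuousLinearEquiv
  have hG' : HasFDerivAt (c ∘ g) (e : E →L[ℝ] E) x := (hG.differentiableAt hinf).hasFDerivAt
  have hstrict := hG.hasStrictFDerivAt' hG' hinf
  set Ψ := hstrict.toOpenPartialHomeomorph (c ∘ g)
  -- `Ψ` is `c ∘ g` as a local homeomorphism near `x`; following it by `c.symm` gives back `g`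
  -- where `g` lands in the chart's source.
  set s := interior (g ⁻¹' c.source)
  have hxs : x ∈ s := mem_interior_iff_mem_nhds.2
    (hg.continuousAt.preimage_mem_nhds (c.open_source.mem_nhds hgc))
  refine ⟨(Ψ.restrOpen s isOpen_interior).trans c.symm, ?_, fun z hz => ?_, ?_⟩
  · simp only [OpenPartialHomeomorph.trans_source, OpenPartialHomeomorph.restrOpen_source,
      OpenPartialHomeomorph.symm_source, mem_inter_iff, mem_preimage]
    exact ⟨⟨hstrict.mem_toOpenPartialHomeomorph_source, hxs⟩, c.map_source hgc⟩
  · have hzs : g z ∈ c.source := interior_subset (s := g ⁻¹' c.source) hz.1.2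
    simp [Ψ, c.left_inv hzs]
  · exact (hG.to_localInverse hG' hinf).contMDiffAt.comp (g x) hc

end LocalInverse

theorem Function.Injective.mapsTo_of_forall_notMem_eq {α : Type*} {f : α → α} {K W : Set α}
    (hf : Injective f) (hfix : ∀ x ∉ K, f x = x) (hKW : K ⊆ W) : MapsTo f W W := by
  intro x hx
  by_cases hxK : x ∈ K
  · by_contra hfx
    have hfxK : f x ∉ K := fun h => hfx (hKW h)
    exact hfxK (by rwa [hf (hfix (f x) hfxK)])
  · rwa [hfix x hxK]

section Conjugation

variable {α β : Type*} [Nonempty α] {g : α → β} {W K : Set α} {h h₁ h₂ : α → α}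

open Classical in
def conjOn (g : α → β) (W : Set α) (h : α → α) (y : β) : β :=
  if y ∈ g '' W then g (h (invFunOn g W y)) else y

theorem conjOn_apply_image (hinj : InjOn g W) {x : α} (hx : x ∈ W) :
    conjOn g W h (g x) = g (h x) := by
  rw [conjOn, if_pos (mem_image_of_mem g hx), hinj.leftInvOn_invFunOn hx]

theorem conjOn_apply_of_notMem {y : β} (hy : y ∉ g '' W) : conjOn g W h y = y :=
  if_neg hy

theorem conjOn_apply_eq_self (hinj : InjOn g W) (hfix : ∀ x ∉ K, h x = x) {y : β}
    (hy : y ∉ g '' K) : conjOn g W h y = y := by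
  by_cases hyW : y ∈ g '' W
  · obtain ⟨x, hx, rfl⟩ := hyW
    rw [conjOn_apply_image hinj hx, hfix x fun hxK => hy (mem_image_of_mem g hxK)]
  · exact conjOn_apply_of_notMem hyW

theorem conjOn_id (hinj : InjOn g W) : conjOn g W id = id :=
  funext fun _ => conjOn_apply_eq_self (K := ∅) hinj (fun _ _ => rfl) (by simp)

theorem conjOn_comp (hinj : InjOn g W) (hmaps : MapsTo h₂ W W) :
    conjOn g W h₁ ∘ conjOn g W h₂ = conjOn g W (h₁ ∘ h₂) := by
  funext y
  by_cases hyW : y ∈ g '' W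
  · obtain ⟨x, hx, rfl⟩ := hyW
    simp only [comp_apply, conjOn_apply_image hinj hx, conjOn_apply_image hinj (hmaps hx)]
  · simp only [comp_apply, conjOn_apply_of_notMem hyW]

end Conjugation

section Gluing

variable {E M : Type*} [NormedAddCommGroup E] [NormedSpace ℝ E] [FiniteDimensional ℝ E]
  [TopologicalSpace M] [T2Space M] [ChartedSpace E M] [IsManifold 𝓘(ℝ, E) ∞ M]
  {g : E → M} {W K : Set E}

theorem contMDiff_conjOn (hW : IsOpen W) (hg : ContMDiffOn 𝓘(ℝ, E) 𝓘(ℝ, E) ∞ g W)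
    (himm : ∀ x ∈ W, Injective (mfderiv 𝓘(ℝ, E) 𝓘(ℝ, E) g x)) (hinj : InjOn g W)
    {h : E → E} (hh : ContMDiff 𝓘(ℝ, E) 𝓘(ℝ, E) ∞ h) (hmaps : MapsTo h W W) (hK : IsCompact K)
    (hKW : K ⊆ W) (hfix : ∀ x ∉ K, h x = x) : ContMDiff 𝓘(ℝ, E) 𝓘(ℝ, E) ∞ (conjOn g W h) := by
  intro y
  by_cases hy : y ∈ g '' K
  · obtain ⟨x, hxK, rfl⟩ := hy
    have hx := hKW hxK
    obtain ⟨Φ, hxΦ, hgΦ, hΦsymm⟩ := exists_openPartialHomeomorph_of_injective_mfderiv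
      (hg.contMDiffAt (hW.mem_nhds hx)) (himm x hx)
    have hgx : g x = Φ x := hgΦ hxΦ
    have hlocal : conjOn g W h =ᶠ[𝓝 (g x)] g ∘ h ∘ Φ.symm := by
      have hy : g x ∈ Φ.target := hgx ▸ Φ.map_source hxΦ
      have hW' : Φ.symm ⁻¹' W ∈ 𝓝 (g x) := Φ.continuousAt_symm hy |>.preimage_mem_nhds <| by
        rw [hgx, Φ.left_inv hxΦ]; exact hW.mem_nhds hx
      filter_upwards [Φ.open_target.mem_nhds hy, hW'] with y' hy' hy'W
      conv_lhs => rw [← Φ.right_inv hy', ← hgΦ (Φ.map_target hy')]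
      exact conjOn_apply_image hinj hy'W
    refine ContMDiffAt.congr_of_eventuallyEq ?_ hlocal
    have hΦx : Φ.symm (g x) = x := by rw [hgx, Φ.left_inv hxΦ]
    have hgh : ContMDiffAt 𝓘(ℝ, E) 𝓘(ℝ, E) ∞ (g ∘ h) (Φ.symm (g x)) := by
      rw [hΦx]
      exact (hg.contMDiffAt (hW.mem_nhds (hmaps hx))).comp x hh.contMDiffAt
    exact hgh.comp (g x) hΦsymm
  · have hgK : IsClosed (g '' K) := (hK.image_of_continuousOn (hg.continuousOn.mono hKW)).isClosed
    refine contMDiffAt_id.congr_of_eventuallyEq ?_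
    filter_upwards [hgK.isOpen_compl.mem_nhds hy] with y' hy'
    exact conjOn_apply_eq_self hinj hfix hy'

theorem exists_diffeomorph_conj (hW : IsOpen W) (hg : ContMDiffOn 𝓘(ℝ, E) 𝓘(ℝ, E) ∞ g W)
    (himm : ∀ x ∈ W, Injective (mfderiv 𝓘(ℝ, E) 𝓘(ℝ, E) g x)) (hinj : InjOn g W)
    (h : E ≃ₘ^∞⟮𝓘(ℝ, E), 𝓘(ℝ, E)⟯ E) (hK : IsCompact K) (hKW : K ⊆ W)
    (hfix : ∀ x ∉ K, h x = x) :
    ∃ ψ : M ≃ₘ^∞⟮𝓘(ℝ, E), 𝓘(ℝ, E)⟯ M,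
      (∀ x ∈ W, ψ (g x) = g (h x)) ∧ IsCompact (closure {y | ψ y ≠ y}) := by
  have hfix_symm (x : E) (hx : x ∉ K) : h.symm x = x := by
    conv_lhs => rw [← hfix x hx, h.symm_apply_apply]
  have hmaps : MapsTo h W W := h.injective.mapsTo_of_forall_notMem_eq hfix hKW
  have hmaps_symm : MapsTo h.symm W W := h.symm.injective.mapsTo_of_forall_notMem_eq hfix_symm hKW
  have hleft : conjOn g W h.symm ∘ conjOn g W h = id := by
    rw [conjOn_comp hinj hmaps, show ⇑h.symm ∘ ⇑h = id from funext h.symm_apply_apply,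
      conjOn_id hinj]
  have hright : conjOn g W h ∘ conjOn g W h.symm = id := by
    rw [conjOn_comp hinj hmaps_symm, show ⇑h ∘ ⇑h.symm = id from funext h.apply_symm_apply,
      conjOn_id hinj]
  refine ⟨{ toFun := conjOn g W h
            invFun := conjOn g W h.symm
            left_inv := congrFun hleft
            right_inv := congrFun hright
            contMDiff_toFun := contMDiff_conjOn hW hg himm hinj h.contMDiff hmaps hK hKW hfix
            contMDiff_invFun :=
              contMDiff_conjOn hW hg himm hinj h.symm.contMDiff hmaps_symm hK hKW hfix_symm },
    fun x hx => conjOn_apply_image hinj hx, ?_⟩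
  have hgK : IsCompact (g '' K) := hK.image_of_continuousOn (hg.continuousOn.mono hKW)
  refine hgK.closure_of_subset fun y hy => ?_
  by_contra hyK
  exact hy (conjOn_apply_eq_self hinj hfix hyK)

end Gluing

/-- If `X ⊆ M` is an embedded closed ball in a smooth `n`-manifold without
boundary and `U ⊆ X` is a nonempty subset open in `M`, then some compactly supported
diffeomorphism of `M` maps `X` into `U`. -/
theorem statement10 (n : ℕ) {M : Type*} [TopologicalSpace M] [T2Space M]
    [ChartedSpace (EuclideanSpace ℝ (Fin n)) M] [IsManifold (𝓡 n) ((⊤ : ℕ∞) : WithTop ℕ∞) M]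
    (X : Set M) (hX : IsBallImageIn n X)
    (U : Set M) (hUX : U ⊆ X) (hU : IsOpen U) (hUne : U.Nonempty) :
    ∃ ψ : M → M, IsCSDiffeoM n ψ ∧ ψ '' X ⊆ U := by
  obtain ⟨U₀, g, hU₀, hB, hg, hinj, himm, rfl⟩ := hX
  obtain ⟨_, hqU⟩ := hUne
  obtain ⟨q, hq, rfl⟩ := hUX hqU
  obtain ⟨δ, hδ, hδU₀⟩ :=
    (isCompact_closedBall (0 : EuclideanSpace ℝ (Fin n)) 1).exists_thickening_subset_open hU₀ hB
  rw [thickening_closedBall hδ zero_le_one] at hδU₀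
  obtain ⟨ε, hε, hεU⟩ := Metric.isOpen_iff.1 (hg.continuousOn.isOpen_inter_preimage hU₀ hU) q
    ⟨hB hq, hqU⟩
  obtain ⟨h, hfix, hmaps⟩ :=
    exists_diffeomorph_mapsTo_ball one_pos (lt_add_of_pos_right 1 (half_pos hδ)) hq hε
  obtain ⟨ψ, hψ, hsupp⟩ := exists_diffeomorph_conj isOpen_ball (hg.mono hδU₀)
    (fun x hx => himm x (hδU₀ hx)) (hinj.mono hδU₀) h (isCompact_closedBall 0 (1 + δ / 2))
    (closedBall_subset_ball (by linarith)) fun x hx => hfix x (hx <| ball_subset_closedBall ·)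
  refine ⟨ψ, ⟨ψ.contMDiff, ⟨ψ.symm, ψ.symm.contMDiff, ψ.symm_apply_apply, ψ.apply_symm_apply⟩,
    hsupp⟩, ?_⟩
  rintro _ ⟨_, ⟨x, hx, rfl⟩, rfl⟩
  rw [hψ x (closedBall_subset_ball (by linarith) hx)]
  exact (hεU (hmaps hx)).2
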